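/- Let K = C(a, b) be a rational function field in two variables over C, and let E be the elliptic curve y^2 = x^3 + a^2 − b^3 over K. Then P = (b, a) is a K-rational point of E of infinite order. -/

import Mathlib

/-!
Specialize at `a = b = 1`, a point of the plane where `a² − b³` vanishes. Elements of `ℂ(a, b)`
regular there have a value in `ℂ`, and `E` reduces to the cuspidal cubic `y² = x³`, whose
nonsingular points `(r⁻², r⁻³)`, `r ≠ 0`, form a group isomorphic to `(ℂ, +)` through the
parameter `r = x / y`. The chord-tangent formulas are compatible with the reduction, so if `P`
reduces to the point with parameter `r`, then `n • P` is an affine point reducing to the point with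
parameter `n r`; in particular `n • P ≠ 0` for `n ≥ 1`. Here `P = (b, a)` reduces to `(1, 1)`,
the point with parameter `1`.
-/

/-- The rational function field `ℂ(a, b)` in two variables. -/
abbrev K18 : Type := FractionRing (MvPolynomial (Fin 2) ℂ)

/-- The element `a` of `ℂ(a, b)`. -/
noncomputable def a18 : K18 := algebraMap (MvPolynomial (Fin 2) ℂ) K18 (MvPolynomial.X 0)

/-- The element `b` of `ℂ(a, b)`. -/
noncomputable def b18 : K18 := algebraMap (MvPolynomial (Fin 2) ℂ) K18 (MvPolynomial.X 1)

/-- The elliptic curve `E : y² = x³ + a² − b³` over `K = ℂ(a, b)`. -/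
noncomputable def W18 : WeierstrassCurve.Affine K18 :=
  ⟨0, 0, 0, 0, a18 ^ 2 - b18 ^ 3⟩

section Reduction

variable {R K L : Type*} [CommRing R] [Field K] [Algebra R K] [Field L]
  (φ : R →+* L)

/-- `x` lies in the localization of `R` at `ker φ` and `φ` extends to it, sending `x` to `v`. -/
def ReducesTo (x : K) (v : L) : Prop :=
  ∃ p q : R, φ q ≠ 0 ∧ x = algebraMap R K p / algebraMap R K q ∧ v = φ p / φ q

variable {φ}

lemma algebraMap_ne_zero_of_map_ne_zero [IsFractionRing R K] {q : R} (hq : φ q ≠ 0) :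
    algebraMap R K q ≠ 0 :=
  (map_ne_zero_iff _ (IsFractionRing.injective R K)).mpr (ne_of_apply_ne φ (by simpa using hq))

variable (φ) in
lemma reducesTo_algebraMap (p : R) : ReducesTo φ (algebraMap R K p) (φ p) :=
  ⟨p, 1, by simp, by simp, by simp⟩

variable (φ) in
lemma reducesTo_natCast (n : ℕ) : ReducesTo φ (n : K) (n : L) := by
  simpa using reducesTo_algebraMap (K := K) φ n

namespace ReducesTo

variable {x x' : K} {v v' : L}

lemma add [IsFractionRing R K] (h : ReducesTo φ x v) (h' : ReducesTo φ x' v') :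
    ReducesTo φ (x + x') (v + v') := by
  obtain ⟨p, q, hq, rfl, rfl⟩ := h
  obtain ⟨p', q', hq', rfl, rfl⟩ := h'
  refine ⟨p * q' + q * p', q * q', by simpa using mul_ne_zero hq hq', ?_, ?_⟩
  · rw [div_add_div _ _ (algebraMap_ne_zero_of_map_ne_zero hq)
      (algebraMap_ne_zero_of_map_ne_zero hq')]
    simp
  · rw [div_add_div _ _ hq hq']
    simp

lemma mul (h : ReducesTo φ x v) (h' : ReducesTo φ x' v') : ReducesTo φ (x * x') (v * v') := by
  obtain ⟨p, q, hq, rfl, rfl⟩ := h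
  obtain ⟨p', q', hq', rfl, rfl⟩ := h'
  exact ⟨p * p', q * q', by simpa using mul_ne_zero hq hq', by simp [div_mul_div_comm],
    by simp [div_mul_div_comm]⟩

lemma neg (h : ReducesTo φ x v) : ReducesTo φ (-x) (-v) := by
  obtain ⟨p, q, hq, rfl, rfl⟩ := h
  exact ⟨-p, q, hq, by simp [neg_div], by simp [neg_div]⟩

lemma sub [IsFractionRing R K] (h : ReducesTo φ x v) (h' : ReducesTo φ x' v') :
    ReducesTo φ (x - x') (v - v') := by
  simpa only [sub_eq_add_neg] using h.add h'.neg

lemma pow (h : ReducesTo φ x v) (n : ℕ) : ReducesTo φ (x ^ n) (v ^ n) := by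
  induction n with
  | zero => simpa using reducesTo_algebraMap (K := K) φ 1
  | succ n ih => simpa only [pow_succ] using ih.mul h

lemma inv (h : ReducesTo φ x v) (hv : v ≠ 0) : ReducesTo φ x⁻¹ v⁻¹ := by
  obtain ⟨p, q, hq, rfl, rfl⟩ := h
  exact ⟨q, p, (div_ne_zero_iff.mp hv).1, by rw [inv_div], by rw [inv_div]⟩

lemma div (h : ReducesTo φ x v) (h' : ReducesTo φ x' v') (hv' : v' ≠ 0) :
    ReducesTo φ (x / x') (v / v') := by
  simpa only [div_eq_mul_inv] using h.mul (h'.inv hv')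

lemma unique [IsFractionRing R K] (h : ReducesTo φ x v) (h' : ReducesTo φ x v') : v = v' := by
  obtain ⟨p, q, hq, hx, rfl⟩ := h
  obtain ⟨p', q', hq', hx', rfl⟩ := h'
  have hpq : p * q' = p' * q := IsFractionRing.injective R K <| by
    simpa [div_eq_div_iff (algebraMap_ne_zero_of_map_ne_zero (K := K) hq)
      (algebraMap_ne_zero_of_map_ne_zero (K := K) hq')] using hx.symm.trans hx'
  rw [div_eq_div_iff hq hq', ← map_mul, ← map_mul, hpq]

lemma ne [IsFractionRing R K] (h : ReducesTo φ x v) (h' : ReducesTo φ x' v') (hvv' : v ≠ v') :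
    x ≠ x' := by
  rintro rfl
  exact hvv' (h.unique h')

lemma ne_zero [IsFractionRing R K] (h : ReducesTo φ x v) (hv : v ≠ 0) : x ≠ 0 :=
  h.ne (by simpa using reducesTo_algebraMap (K := K) φ 0) hv

end ReducesTo

variable (φ) in
/-- `(x, y)` reduces to the nonsingular point of the cusp `y² = x³` with parameter `r = x / y`. -/
def ReducesToCusp (x y : K) (r : L) : Prop :=
  r ≠ 0 ∧ ReducesTo φ x (r ^ 2)⁻¹ ∧ ReducesTo φ y (r ^ 3)⁻¹

open WeierstrassCurve.Affine

lemma WeierstrassCurve.Affine.negY_of_isShortNF {F : Type*} [CommRing F]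
    {W : WeierstrassCurve.Affine F} [W.IsShortNF] (x y : F) : W.negY x y = -y := by
  simp

namespace ReducesToCusp

variable [IsFractionRing R K] {W : WeierstrassCurve.Affine K} [W.IsShortNF]
  {x y x₁ y₁ x₂ y₂ : K} {r s : L}

lemma reducesTo_sub_negY (H : ReducesToCusp φ x y r) :
    ReducesTo φ (y - W.negY x y) (2 * (r ^ 3)⁻¹) := by
  rw [negY_of_isShortNF]
  convert H.2.2.sub H.2.2.neg using 1
  ring

lemma y_ne_negY [NeZero (2 : L)] (H : ReducesToCusp φ x y r) : y ≠ W.negY x y :=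
  sub_ne_zero.mp <| H.reducesTo_sub_negY.ne_zero <|
    mul_ne_zero two_ne_zero (inv_ne_zero (pow_ne_zero 3 H.1))

lemma nonsingular [NeZero (2 : L)] (H : ReducesToCusp φ x y r) (h : W.Equation x y) :
    W.Nonsingular x y :=
  (nonsingular_iff x y).mpr ⟨h, Or.inr H.y_ne_negY⟩

/-- `(s² + s r + r²) / (s r (s + r))` is the slope of the chord of the cusp through the points with
parameters `s` and `r` (or of its tangent when `s = r`). -/
lemma of_slope (H₁ : ReducesToCusp φ x₁ y₁ s) (H₂ : ReducesToCusp φ x₂ y₂ r) (hsr : s + r ≠ 0)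
    {ℓ : K} (hℓ : ReducesTo φ ℓ ((s ^ 2 + s * r + r ^ 2) / (s * r * (s + r)))) :
    ReducesToCusp φ (W.addX x₁ x₂ ℓ) (W.addY x₁ x₂ y₁ ℓ) (s + r) := by
  obtain ⟨hs, hx₁, hy₁⟩ := H₁
  obtain ⟨hr, hx₂, -⟩ := H₂
  have hX : ReducesTo φ (W.addX x₁ x₂ ℓ) ((s + r) ^ 2)⁻¹ := by
    simp only [addX, WeierstrassCurve.a₁_of_isShortNF, WeierstrassCurve.a₂_of_isShortNF, zero_mul,
      add_zero, sub_zero]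
    convert ((hℓ.pow 2).sub hx₁).sub hx₂ using 1
    field_simp
    ring
  refine ⟨hsr, hX, ?_⟩
  rw [addY, negAddY, negY_of_isShortNF]
  convert ((hℓ.mul (hX.sub hx₁)).add hy₁).neg using 1
  field_simp
  ring

variable [DecidableEq K]

lemma add (h₁ : W.Nonsingular x₁ y₁) (h₂ : W.Nonsingular x₂ y₂) (H₁ : ReducesToCusp φ x₁ y₁ s)
    (H₂ : ReducesToCusp φ x₂ y₂ r) (hsr : s ^ 2 ≠ r ^ 2) :
    ∃ (x y : K) (h : W.Nonsingular x y),
      Point.some _ _ h₁ + Point.some _ _ h₂ = Point.some _ _ h ∧ ReducesToCusp φ x y (s + r) := by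
  have hx : x₁ ≠ x₂ := H₁.2.1.ne H₂.2.1 (by simpa using hsr)
  have hxy : ¬(x₁ = x₂ ∧ y₁ = W.negY x₂ y₂) := fun e => hx e.1
  have hsr' : s + r ≠ 0 := fun h => hsr (by rw [eq_neg_of_add_eq_zero_left h, neg_sq])
  refine ⟨_, _, nonsingular_add h₁ h₂ hxy, Point.add_some hxy, H₁.of_slope H₂ hsr' ?_⟩
  rw [slope_of_X_ne hx]
  convert (H₁.2.2.sub H₂.2.2).div (H₁.2.1.sub H₂.2.1) (sub_ne_zero.mpr (by simpa using hsr))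
    using 1
  field_simp [H₁.1, H₂.1]
  ring

lemma double [NeZero (2 : L)] (ha₄ : ReducesTo φ W.a₄ 0) (h : W.Nonsingular x y)
    (H : ReducesToCusp φ x y r) :
    ∃ (x' y' : K) (h' : W.Nonsingular x' y'),
      Point.some _ _ h + Point.some _ _ h = Point.some _ _ h' ∧ ReducesToCusp φ x' y' (2 * r) := by
  have hxy : ¬(x = x ∧ y = W.negY x y) := fun e => H.y_ne_negY e.2
  refine ⟨_, _, nonsingular_add h h hxy, Point.add_some hxy, two_mul r ▸ H.of_slope H ?_ ?_⟩
  · rw [← two_mul]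
    exact mul_ne_zero two_ne_zero H.1
  rw [slope_of_Y_ne rfl H.y_ne_negY]
  simp only [WeierstrassCurve.a₁_of_isShortNF, WeierstrassCurve.a₂_of_isShortNF, zero_mul,
    mul_zero, sub_zero, add_zero]
  convert (((reducesTo_natCast φ 3).mul (H.2.1.pow 2)).add ha₄).div
    (H.reducesTo_sub_negY (W := W)) (mul_ne_zero two_ne_zero (inv_ne_zero (pow_ne_zero 3 H.1)))
    using 1
  · push_cast
    ring
  · have h2 : (2 : L) ≠ 0 := two_ne_zero
    have hr := H.1
    push_cast
    ring_nf
    field_simp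

lemma nsmul [CharZero L] (ha₄ : ReducesTo φ W.a₄ 0) (h : W.Nonsingular x y)
    (H : ReducesToCusp φ x y r) (n : ℕ) :
    ∃ (x' y' : K) (h' : W.Nonsingular x' y'),
      (n + 1) • Point.some _ _ h = Point.some _ _ h' ∧ ReducesToCusp φ x' y' ((n + 1) * r) := by
  induction n with
  | zero => exact ⟨x, y, h, one_nsmul _, by simpa using H⟩
  | succ n ih =>
    obtain ⟨x', y', h', hn, Hn⟩ := ih
    rcases n with _ | n
    · obtain ⟨x'', y'', h'', hadd, Hadd⟩ := H.double ha₄ h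
      exact ⟨x'', y'', h'', by rw [succ_nsmul, one_nsmul, hadd], by norm_num [Hadd]⟩
    · have hsr : (((n + 1 : ℕ) + 1) * r) ^ 2 ≠ r ^ 2 := by
        rw [mul_pow, Ne, mul_eq_right₀ (pow_ne_zero 2 H.1)]
        exact_mod_cast (Nat.one_lt_pow two_ne_zero (by omega : 1 < n + 1 + 1)).ne'
      obtain ⟨x'', y'', h'', hadd, Hadd⟩ := Hn.add h' h H hsr
      refine ⟨x'', y'', h'', by rw [succ_nsmul, hn, hadd], ?_⟩
      convert Hadd using 1
      push_cast
      ring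

lemma not_isOfFinAddOrder [CharZero L] (ha₄ : ReducesTo φ W.a₄ 0) (h : W.Nonsingular x y)
    (H : ReducesToCusp φ x y r) : ¬IsOfFinAddOrder (Point.some _ _ h) := by
  rw [isOfFinAddOrder_iff_nsmul_eq_zero]
  rintro ⟨_ | n, hn, hzero⟩
  · exact hn.false
  obtain ⟨x', y', h', hsome, -⟩ := H.nsmul ha₄ h n
  exact Point.some_ne_zero h' (hsome ▸ hzero)

end ReducesToCusp

end Reduction

instance : W18.IsShortNF := ⟨rfl, rfl, rfl⟩

lemma reducesToCusp_b18_a18 :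
    ReducesToCusp (MvPolynomial.eval ![(1 : ℂ), 1]) b18 a18 1 := by
  refine ⟨one_ne_zero, ?_, ?_⟩
  · simpa [b18] using reducesTo_algebraMap (K := K18) (MvPolynomial.eval ![(1 : ℂ), 1]) (.X 1)
  · simpa [a18] using reducesTo_algebraMap (K := K18) (MvPolynomial.eval ![(1 : ℂ), 1]) (.X 0)

/-- Let `K = ℂ(a, b)` be a rational function field in two variables over `ℂ`,
and let `E` be the elliptic curve `y² = x³ + a² − b³` over `K`. Then `P = (b, a)` is a
`K`-rational point of `E` of infinite order. -/
theorem stmt_18 :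
    ∃ h : W18.Nonsingular b18 a18,
      ¬ IsOfFinAddOrder (WeierstrassCurve.Affine.Point.some _ _ h) := by
  have ha₄ : ReducesTo (MvPolynomial.eval ![(1 : ℂ), 1]) W18.a₄ 0 := by
    simpa [W18] using reducesTo_algebraMap (K := K18) (MvPolynomial.eval ![(1 : ℂ), 1]) 0
  have h := reducesToCusp_b18_a18.nonsingular (W := W18) <| by
    rw [WeierstrassCurve.Affine.equation_iff]
    simp [W18]
  exact ⟨h, reducesToCusp_b18_a18.not_isOfFinAddOrder ha₄ h⟩
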